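/- Let f : ℂ → ℂ^N be holomorphic and nowhere vanishing, with P₊f nowhere vanishing, and set P₀ = P(f), P₁ = P(P₊f). Then for all real constants α₀, α₁, the matrix ℙ = α₀P₀ + α₁P₁ satisfies tr(∂ℙ · ∂ℙ) = 0 at every point of ℂ; i.e. the (+,+) component of the induced metric of the corresponding surface vanishes identically. -/

import Mathlib

open Complex Matrix

/-- Wirtinger derivative ∂ = (∂/∂ζ₁ − i ∂/∂ζ₂)/2 of a map ℂ → ℂ. -/
noncomputable def wD (f : ℂ → ℂ) (z : ℂ) : ℂ :=
  (fderiv ℝ f z 1 - Complex.I * fderiv ℝ f z Complex.I) / 2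

/-- Anti-Wirtinger derivative ∂̄ = (∂/∂ζ₁ + i ∂/∂ζ₂)/2 of a map ℂ → ℂ. -/
noncomputable def wDbar (f : ℂ → ℂ) (z : ℂ) : ℂ :=
  (fderiv ℝ f z 1 + Complex.I * fderiv ℝ f z Complex.I) / 2

/-- Componentwise Wirtinger derivative for vector-valued maps. -/
noncomputable def wDV {N : ℕ} (f : ℂ → Fin N → ℂ) (z : ℂ) : Fin N → ℂ :=
  fun i => wD (fun w => f w i) z

/-- Componentwise anti-Wirtinger derivative for vector-valued maps. -/
noncomputable def wDbarV {N : ℕ} (f : ℂ → Fin N → ℂ) (z : ℂ) : Fin N → ℂ :=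
  fun i => wDbar (fun w => f w i) z

/-- Hermitian inner product a†·b = Σᵢ āᵢ bᵢ on ℂ^N. -/
noncomputable def herm {N : ℕ} (a b : Fin N → ℂ) : ℂ :=
  ∑ i, (starRingEnd ℂ) (a i) * b i

/-- Squared norm |a|² as a real number. -/
noncomputable def nsq {N : ℕ} (a : Fin N → ℂ) : ℝ :=
  ∑ i, Complex.normSq (a i)

/-- The operator P₊ g = ∂g − g (g†·∂g)/|g|². -/
noncomputable def Pp {N : ℕ} (g : ℂ → Fin N → ℂ) : ℂ → Fin N → ℂ :=
  fun z i => wDV g z i - g z i * (herm (g z) (wDV g z) / herm (g z) (g z))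

/-- Iterates of P₊ : P₊⁰ g = g, P₊^{k+1} g = P₊ (P₊^k g). -/
noncomputable def PpIter {N : ℕ} (g : ℂ → Fin N → ℂ) : ℕ → (ℂ → Fin N → ℂ)
  | 0 => g
  | k + 1 => Pp (PpIter g k)

/-- The projector P(V) = V ⊗ V† / |V|². -/
noncomputable def proj {N : ℕ} (V : ℂ → Fin N → ℂ) (z : ℂ) : Matrix (Fin N) (Fin N) ℂ :=
  fun i j => V z i * (starRingEnd ℂ) (V z j) / herm (V z) (V z)

/-- Entrywise Wirtinger derivative for matrix-valued maps. -/
noncomputable def wDM {N : ℕ} (M : ℂ → Matrix (Fin N) (Fin N) ℂ) (z : ℂ) :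
    Matrix (Fin N) (Fin N) ℂ :=
  fun i j => wD (fun w => M w i j) z

/-- Entrywise anti-Wirtinger derivative for matrix-valued maps. -/
noncomputable def wDbarM {N : ℕ} (M : ℂ → Matrix (Fin N) (Fin N) ℂ) (z : ℂ) :
    Matrix (Fin N) (Fin N) ℂ :=
  fun i j => wDbar (fun w => M w i j) z

/-! ### Wirtinger calculus toolkit -/

lemma wD_congr {f g : ℂ → ℂ} {z : ℂ} (h : f =ᶠ[nhds z] g) : wD f z = wD g z := by
  unfold wD; rw [h.fderiv_eq]

lemma wD_const (c : ℂ) (z : ℂ) : wD (fun _ => c) z = 0 := by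
  simp [wD]

lemma wDbar_const (c : ℂ) (z : ℂ) : wDbar (fun _ => c) z = 0 := by
  simp [wDbar]

lemma wD_add {f g : ℂ → ℂ} {z : ℂ} (hf : DifferentiableAt ℝ f z)
    (hg : DifferentiableAt ℝ g z) :
    wD (fun w => f w + g w) z = wD f z + wD g z := by
  unfold wD; rw [fderiv_fun_add hf hg]; simp; ring

lemma wDbar_add {f g : ℂ → ℂ} {z : ℂ} (hf : DifferentiableAt ℝ f z)
    (hg : DifferentiableAt ℝ g z) :
    wDbar (fun w => f w + g w) z = wDbar f z + wDbar g z := by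
  unfold wDbar; rw [fderiv_fun_add hf hg]; simp; ring

lemma wD_mul {f g : ℂ → ℂ} {z : ℂ} (hf : DifferentiableAt ℝ f z)
    (hg : DifferentiableAt ℝ g z) :
    wD (fun w => f w * g w) z = wD f z * g z + f z * wD g z := by
  unfold wD; rw [fderiv_fun_mul hf hg]; simp [smul_eq_mul]; ring

lemma wDbar_mul {f g : ℂ → ℂ} {z : ℂ} (hf : DifferentiableAt ℝ f z)
    (hg : DifferentiableAt ℝ g z) :
    wDbar (fun w => f w * g w) z = wDbar f z * g z + f z * wDbar g z := by
  unfold wDbar; rw [fderiv_fun_mul hf hg]; simp [smul_eq_mul]; ring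

lemma wD_sub {f g : ℂ → ℂ} {z : ℂ} (hf : DifferentiableAt ℝ f z)
    (hg : DifferentiableAt ℝ g z) :
    wD (fun w => f w - g w) z = wD f z - wD g z := by
  unfold wD; rw [fderiv_fun_sub hf hg]; simp; ring

lemma wDbar_sub {f g : ℂ → ℂ} {z : ℂ} (hf : DifferentiableAt ℝ f z)
    (hg : DifferentiableAt ℝ g z) :
    wDbar (fun w => f w - g w) z = wDbar f z - wDbar g z := by
  unfold wDbar; rw [fderiv_fun_sub hf hg]; simp; ring

lemma wD_sum {ι : Type*} (s : Finset ι) (F : ι → ℂ → ℂ) {z : ℂ}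
    (h : ∀ i ∈ s, DifferentiableAt ℝ (F i) z) :
    wD (fun w => ∑ i ∈ s, F i w) z = ∑ i ∈ s, wD (F i) z := by
  unfold wD; rw [fderiv_fun_sum h]
  simp only [ContinuousLinearMap.sum_apply, Finset.mul_sum]
  rw [← Finset.sum_sub_distrib, ← Finset.sum_div]

lemma wD_holo {f : ℂ → ℂ} {z : ℂ} (hf : DifferentiableAt ℂ f z) :
    wD f z = deriv f z := by
  unfold wD
  rw [hf.fderiv_restrictScalars ℝ]
  have h1 : (fderiv ℂ f z) 1 = deriv f z := fderiv_apply_one_eq_deriv ..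
  have hI : (fderiv ℂ f z) Complex.I = Complex.I * deriv f z := by
    have := (fderiv ℂ f z).map_smul Complex.I (1 : ℂ)
    simpa [smul_eq_mul, h1] using this
  simp only [ContinuousLinearMap.coe_restrictScalars', h1, hI]
  have hI2 : Complex.I * Complex.I = -1 := Complex.I_mul_I
  linear_combination (-(deriv f z) / 2) * hI2

lemma wDbar_holo {f : ℂ → ℂ} {z : ℂ} (hf : DifferentiableAt ℂ f z) :
    wDbar f z = 0 := by
  unfold wDbar
  rw [hf.fderiv_restrictScalars ℝ]
  have h1 : (fderiv ℂ f z) 1 = deriv f z := fderiv_apply_one_eq_deriv ..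
  have hI : (fderiv ℂ f z) Complex.I = Complex.I * deriv f z := by
    have := (fderiv ℂ f z).map_smul Complex.I (1 : ℂ)
    simpa [smul_eq_mul, h1] using this
  simp only [ContinuousLinearMap.coe_restrictScalars', h1, hI]
  have hI2 : Complex.I * Complex.I = -1 := Complex.I_mul_I
  linear_combination ((deriv f z) / 2) * hI2

lemma wD_conj {f : ℂ → ℂ} {z : ℂ} (hf : DifferentiableAt ℝ f z) :
    wD (fun w => (starRingEnd ℂ) (f w)) z = (starRingEnd ℂ) (wDbar f z) := by
  have hcomp : fderiv ℝ (fun w => (starRingEnd ℂ) (f w)) z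
      = (Complex.conjCLE.toContinuousLinearMap).comp (fderiv ℝ f z) := by
    have h1 : DifferentiableAt ℝ (⇑Complex.conjCLE.toContinuousLinearMap) (f z) :=
      Complex.conjCLE.toContinuousLinearMap.differentiableAt
    have := fderiv_comp z h1 hf
    rw [ContinuousLinearMap.fderiv] at this
    exact this
  unfold wD wDbar
  rw [hcomp]
  simp only [ContinuousLinearMap.coe_comp', Function.comp_apply,
    ContinuousLinearEquiv.coe_coe, Complex.conjCLE_apply]
  rw [map_div₀, map_add, _root_.map_mul, Complex.conj_I]
  simp only [Complex.conj_ofNat]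
  ring

lemma wD_inv {f : ℂ → ℂ} {z : ℂ} (hf : DifferentiableAt ℝ f z) (h0 : f z ≠ 0) :
    wD (fun w => (f w)⁻¹) z = -(wD f z) * ((f z)^2)⁻¹ := by
  have hinv : DifferentiableAt ℝ (fun w => (f w)⁻¹) z := hf.inv h0
  have hev : (fun w => f w * (f w)⁻¹) =ᶠ[nhds z] (fun _ => (1:ℂ)) := by
    filter_upwards [hf.continuousAt.eventually_ne h0] with w hw
    field_simp
  have h1 : wD (fun w => f w * (f w)⁻¹) z = 0 := by
    rw [wD_congr hev, wD_const]
  rw [wD_mul hf hinv] at h1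
  field_simp at h1 ⊢
  linear_combination h1

lemma wD_const_mul {f : ℂ → ℂ} {z : ℂ} (c : ℂ) (hf : DifferentiableAt ℝ f z) :
    wD (fun w => c * f w) z = c * wD f z := by
  rw [wD_mul (differentiableAt_const c) hf, wD_const]; ring

lemma diffAt_conj {q : ℂ → ℂ} {z : ℂ} (hq : DifferentiableAt ℝ q z) :
    DifferentiableAt ℝ (fun w => (starRingEnd ℂ) (q w)) z := by
  exact (Complex.conjCLE.differentiable.differentiableAt).comp z hq

lemma herm_self_ne_zero' {N : ℕ} {a : Fin N → ℂ} (ha : a ≠ 0) :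
    (∑ i, (starRingEnd ℂ) (a i) * a i) ≠ 0 := by
  have h : (∑ i, (starRingEnd ℂ) (a i) * a i) = ((∑ i, Complex.normSq (a i) : ℝ) : ℂ) := by
    push_cast
    refine Finset.sum_congr rfl fun i _ => ?_
    rw [Complex.normSq_eq_conj_mul_self]
  rw [h, Complex.ofReal_ne_zero]
  obtain ⟨j, hj⟩ := Function.ne_iff.mp ha
  have hpos : 0 < ∑ i, Complex.normSq (a i) :=
    Finset.sum_pos' (fun i _ => Complex.normSq_nonneg _)
      ⟨j, Finset.mem_univ j, Complex.normSq_pos.mpr hj⟩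
  exact ne_of_gt hpos

lemma wD_projEntry {p q h : ℂ → ℂ} {z : ℂ}
    (hp : DifferentiableAt ℝ p z) (hq : DifferentiableAt ℝ q z)
    (hh : DifferentiableAt ℝ h z) (h0 : h z ≠ 0) :
    wD (fun w => p w * (starRingEnd ℂ) (q w) * (h w)⁻¹) z
      = (wD p z * (starRingEnd ℂ) (q z) + p z * (starRingEnd ℂ) (wDbar q z)) * (h z)⁻¹
        - p z * (starRingEnd ℂ) (q z) * wD h z * ((h z)^2)⁻¹ := by
  have hq' := diffAt_conj hq
  have hpq : DifferentiableAt ℝ (fun w => p w * (starRingEnd ℂ) (q w)) z := hp.mul hq'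
  have hhinv : DifferentiableAt ℝ (fun w => (h w)⁻¹) z := hh.inv h0
  rw [wD_mul hpq hhinv, wD_mul hp hq', wD_conj hq, wD_inv hh h0]
  ring

/-! ### Auxiliary functions built from `f` -/

noncomputable def auxF' {N : ℕ} (f : ℂ → Fin N → ℂ) (i : Fin N) : ℂ → ℂ :=
  deriv (fun z => f z i)

noncomputable def auxH {N : ℕ} (f : ℂ → Fin N → ℂ) : ℂ → ℂ :=
  fun w => ∑ i, (starRingEnd ℂ) (f w i) * f w i

noncomputable def auxS {N : ℕ} (f : ℂ → Fin N → ℂ) : ℂ → ℂ :=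
  fun w => ∑ i, (starRingEnd ℂ) (f w i) * auxF' f i w

noncomputable def auxU {N : ℕ} (f : ℂ → Fin N → ℂ) : ℂ → ℂ :=
  fun w => auxS f w * (auxH f w)⁻¹

noncomputable def auxG {N : ℕ} (f : ℂ → Fin N → ℂ) (i : Fin N) : ℂ → ℂ :=
  fun w => auxF' f i w - f w i * auxU f w

noncomputable def auxH1 {N : ℕ} (f : ℂ → Fin N → ℂ) : ℂ → ℂ :=
  fun w => ∑ i, (starRingEnd ℂ) (auxG f i w) * auxG f i w

section AuxLemmas

variable {N : ℕ} {f : ℂ → Fin N → ℂ}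

lemma aux_hFd (hf : ∀ i, Differentiable ℂ fun z => f z i) (i : Fin N) (w : ℂ) :
    DifferentiableAt ℝ (fun z => f z i) w :=
  ((hf i) w).restrictScalars ℝ

lemma aux_hF'c (hf : ∀ i, Differentiable ℂ fun z => f z i) (i : Fin N) :
    Differentiable ℂ (auxF' f i) := by
  have h1 : AnalyticOnNhd ℂ (fun z => f z i) Set.univ :=
    (hf i).differentiableOn.analyticOnNhd isOpen_univ
  exact fun w => (h1.deriv w (Set.mem_univ w)).differentiableAt

lemma aux_hF'd (hf : ∀ i, Differentiable ℂ fun z => f z i) (i : Fin N) (w : ℂ) :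
    DifferentiableAt ℝ (auxF' f i) w :=
  ((aux_hF'c hf i) w).restrictScalars ℝ

lemma aux_hHd (hf : ∀ i, Differentiable ℂ fun z => f z i) (w : ℂ) :
    DifferentiableAt ℝ (auxH f) w := by
  exact DifferentiableAt.fun_sum fun i _ => (diffAt_conj (aux_hFd hf i w)).mul (aux_hFd hf i w)

lemma aux_hSd (hf : ∀ i, Differentiable ℂ fun z => f z i) (w : ℂ) :
    DifferentiableAt ℝ (auxS f) w := by
  exact DifferentiableAt.fun_sum fun i _ => (diffAt_conj (aux_hFd hf i w)).mul (aux_hF'd hf i w)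

lemma aux_hH0 (hf0 : ∀ z, f z ≠ 0) (w : ℂ) : auxH f w ≠ 0 :=
  herm_self_ne_zero' (hf0 w)

lemma aux_hUd (hf : ∀ i, Differentiable ℂ fun z => f z i) (hf0 : ∀ z, f z ≠ 0) (w : ℂ) :
    DifferentiableAt ℝ (auxU f) w :=
  (aux_hSd hf w).mul ((aux_hHd hf w).inv (aux_hH0 hf0 w))

lemma aux_hGd (hf : ∀ i, Differentiable ℂ fun z => f z i) (hf0 : ∀ z, f z ≠ 0)
    (i : Fin N) (w : ℂ) : DifferentiableAt ℝ (auxG f i) w :=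
  (aux_hF'd hf i w).sub ((aux_hFd hf i w).mul (aux_hUd hf hf0 w))

lemma aux_hH1d (hf : ∀ i, Differentiable ℂ fun z => f z i) (hf0 : ∀ z, f z ≠ 0) (w : ℂ) :
    DifferentiableAt ℝ (auxH1 f) w := by
  exact DifferentiableAt.fun_sum fun i _ =>
    (diffAt_conj (aux_hGd hf hf0 i w)).mul (aux_hGd hf hf0 i w)

lemma aux_hPp (hf : ∀ i, Differentiable ℂ fun z => f z i) (w : ℂ) (i : Fin N) :
    Pp f w i = auxG f i w := by
  have h1 : wDV f w = fun i => auxF' f i w := by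
    funext i
    exact wD_holo ((hf i) w)
  simp only [Pp, h1, herm, auxG, auxU, auxS, auxH, div_eq_mul_inv]

lemma aux_hH1_0 (hf : ∀ i, Differentiable ℂ fun z => f z i)
    (hPf0 : ∀ z, Pp f z ≠ 0) (w : ℂ) : auxH1 f w ≠ 0 := by
  have h : (fun i => auxG f i w) ≠ 0 := by
    intro hc
    apply hPf0 w
    funext i
    rw [aux_hPp hf w i]
    exact congrFun hc i
  exact herm_self_ne_zero' h

lemma aux_wDF (hf : ∀ i, Differentiable ℂ fun z => f z i) (i : Fin N) (w : ℂ) :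
    wD (fun z => f z i) w = auxF' f i w :=
  wD_holo ((hf i) w)

lemma aux_wDH (hf : ∀ i, Differentiable ℂ fun z => f z i) (w : ℂ) :
    wD (auxH f) w = auxS f w := by
  have h1 := wD_sum Finset.univ (fun i w => (starRingEnd ℂ) (f w i) * f w i)
    (z := w) (fun i _ => (diffAt_conj (aux_hFd hf i w)).mul (aux_hFd hf i w))
  have h2 : ∀ i : Fin N, wD (fun w => (starRingEnd ℂ) (f w i) * f w i) w
      = (starRingEnd ℂ) (f w i) * auxF' f i w := by
    intro i
    rw [wD_mul (diffAt_conj (aux_hFd hf i w)) (aux_hFd hf i w), wD_conj (aux_hFd hf i w),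
      wDbar_holo ((hf i) w), aux_wDF hf, map_zero, zero_mul, zero_add]
  calc wD (auxH f) w = ∑ i, wD (fun w => (starRingEnd ℂ) (f w i) * f w i) w := h1
    _ = ∑ i, (starRingEnd ℂ) (f w i) * auxF' f i w := Finset.sum_congr rfl fun i _ => h2 i
    _ = auxS f w := rfl

lemma aux_wDbarG (hf : ∀ i, Differentiable ℂ fun z => f z i) (hf0 : ∀ z, f z ≠ 0)
    (j : Fin N) (w : ℂ) :
    wDbar (auxG f j) w = -(f w j * wDbar (auxU f) w) := by
  have h1 : wDbar (auxG f j) w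
      = wDbar (auxF' f j) w - wDbar (fun w => f w j * auxU f w) w :=
    wDbar_sub (aux_hF'd hf j w) ((aux_hFd hf j w).mul (aux_hUd hf hf0 w))
  rw [h1, wDbar_holo ((aux_hF'c hf j) w),
    wDbar_mul (aux_hFd hf j w) (aux_hUd hf hf0 w), wDbar_holo ((hf j) w)]
  ring

lemma aux_hvw (hf : ∀ i, Differentiable ℂ fun z => f z i) (hf0 : ∀ z, f z ≠ 0) (w : ℂ) :
    ∑ i, (starRingEnd ℂ) (f w i) * auxG f i w = 0 := by
  have h1 : ∑ i, (starRingEnd ℂ) (f w i) * auxG f i w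
      = auxS f w - auxH f w * auxU f w := by
    simp only [auxG, mul_sub, Finset.sum_sub_distrib]
    congr 1
    rw [auxH, Finset.sum_mul]
    exact Finset.sum_congr rfl fun i _ => by ring
  rw [h1, auxU]
  field_simp [aux_hH0 hf0 w]
  ring

lemma aux_hvD (hf : ∀ i, Differentiable ℂ fun z => f z i) (hf0 : ∀ z, f z ≠ 0) (w : ℂ) :
    ∑ i, (starRingEnd ℂ) (f w i) * wD (auxG f i) w = 0 := by
  have hzero : (fun w => ∑ i, (starRingEnd ℂ) (f w i) * auxG f i w) = fun _ => (0:ℂ) :=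
    funext fun w => aux_hvw hf hf0 w
  have h0 : wD (fun w => ∑ i, (starRingEnd ℂ) (f w i) * auxG f i w) w = 0 := by
    rw [hzero, wD_const]
  have h1 := wD_sum Finset.univ (fun i w => (starRingEnd ℂ) (f w i) * auxG f i w)
    (z := w) (fun i _ => (diffAt_conj (aux_hFd hf i w)).mul (aux_hGd hf hf0 i w))
  rw [h1] at h0
  have h2 : ∀ i : Fin N, wD (fun w => (starRingEnd ℂ) (f w i) * auxG f i w) w
      = (starRingEnd ℂ) (f w i) * wD (auxG f i) w := by
    intro i
    rw [wD_mul (diffAt_conj (aux_hFd hf i w)) (aux_hGd hf hf0 i w), wD_conj (aux_hFd hf i w),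
      wDbar_holo ((hf i) w), map_zero, zero_mul, zero_add]
  rw [Finset.sum_congr rfl fun i _ => h2 i] at h0
  exact h0

lemma aux_wDH1 (hf : ∀ i, Differentiable ℂ fun z => f z i) (hf0 : ∀ z, f z ≠ 0) (w : ℂ) :
    wD (auxH1 f) w = ∑ i, (starRingEnd ℂ) (auxG f i w) * wD (auxG f i) w := by
  have h1 := wD_sum Finset.univ (fun i w => (starRingEnd ℂ) (auxG f i w) * auxG f i w)
    (z := w) (fun i _ => (diffAt_conj (aux_hGd hf hf0 i w)).mul (aux_hGd hf hf0 i w))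
  have h2 : ∀ i : Fin N, wD (fun w => (starRingEnd ℂ) (auxG f i w) * auxG f i w) w
      = -((starRingEnd ℂ) (wDbar (auxU f) w) * ((starRingEnd ℂ) (f w i) * auxG f i w))
        + (starRingEnd ℂ) (auxG f i w) * wD (auxG f i) w := by
    intro i
    rw [wD_mul (diffAt_conj (aux_hGd hf hf0 i w)) (aux_hGd hf hf0 i w),
      wD_conj (aux_hGd hf hf0 i w), aux_wDbarG hf hf0 i w, map_neg, _root_.map_mul]
    ring
  calc wD (auxH1 f) w
      = ∑ i, wD (fun w => (starRingEnd ℂ) (auxG f i w) * auxG f i w) w := h1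
    _ = ∑ i, (-((starRingEnd ℂ) (wDbar (auxU f) w) * ((starRingEnd ℂ) (f w i) * auxG f i w))
        + (starRingEnd ℂ) (auxG f i w) * wD (auxG f i) w) :=
        Finset.sum_congr rfl fun i _ => h2 i
    _ = -((starRingEnd ℂ) (wDbar (auxU f) w) * ∑ i, (starRingEnd ℂ) (f w i) * auxG f i w)
        + ∑ i, (starRingEnd ℂ) (auxG f i w) * wD (auxG f i) w := by
        rw [Finset.sum_add_distrib, Finset.mul_sum, ← Finset.sum_neg_distrib]
    _ = ∑ i, (starRingEnd ℂ) (auxG f i w) * wD (auxG f i) w := by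
        rw [aux_hvw hf hf0 w, mul_zero, neg_zero, zero_add]

lemma aux_orth_v (hf : ∀ i, Differentiable ℂ fun z => f z i) (hf0 : ∀ z, f z ≠ 0)
    (w : ℂ) (C : ℂ) :
    ∑ i, (starRingEnd ℂ) (f w i) * (wD (auxG f i) w - auxG f i w * C) = 0 := by
  have e1 : ∑ i, (starRingEnd ℂ) (f w i) * (wD (auxG f i) w - auxG f i w * C)
      = (∑ i, (starRingEnd ℂ) (f w i) * wD (auxG f i) w)
        - (∑ i, (starRingEnd ℂ) (f w i) * auxG f i w) * C := by
    rw [Finset.sum_mul, ← Finset.sum_sub_distrib]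
    exact Finset.sum_congr rfl fun i _ => by ring
  rw [e1, aux_hvD hf hf0 w, aux_hvw hf hf0 w, zero_mul, sub_zero]

lemma aux_orth_w (hf : ∀ i, Differentiable ℂ fun z => f z i) (hf0 : ∀ z, f z ≠ 0)
    (hPf0 : ∀ z, Pp f z ≠ 0) (w : ℂ) :
    ∑ i, (starRingEnd ℂ) (auxG f i w) * (wD (auxG f i) w
      - auxG f i w * ((∑ k, (starRingEnd ℂ) (auxG f k w) * wD (auxG f k) w)
          * (auxH1 f w)⁻¹)) = 0 := by
  obtain ⟨T, hT⟩ : ∃ T, ∑ k, (starRingEnd ℂ) (auxG f k w) * wD (auxG f k) w = T := ⟨_, rfl⟩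
  obtain ⟨b, hb⟩ : ∃ b, auxH1 f w = b := ⟨_, rfl⟩
  have hbsum : ∑ i, (starRingEnd ℂ) (auxG f i w) * auxG f i w = b := hb
  have hbne : b ≠ 0 := hb ▸ aux_hH1_0 hf hPf0 w
  rw [hT, hb]
  have e1 : ∑ i, (starRingEnd ℂ) (auxG f i w) * (wD (auxG f i) w - auxG f i w * (T * b⁻¹))
      = (∑ i, (starRingEnd ℂ) (auxG f i w) * wD (auxG f i) w)
        - (∑ i, (starRingEnd ℂ) (auxG f i w) * auxG f i w) * (T * b⁻¹) := by
    rw [Finset.sum_mul, ← Finset.sum_sub_distrib]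
    exact Finset.sum_congr rfl fun i _ => by ring
  rw [e1, hT, hbsum]
  field_simp
  ring

lemma aux_entry (hf : ∀ i, Differentiable ℂ fun z => f z i) (hf0 : ∀ z, f z ≠ 0)
    (hPf0 : ∀ z, Pp f z ≠ 0) (α₀ α₁ : ℝ) (ζ : ℂ) (i j : Fin N) :
    wD (fun w => (α₀:ℂ) * (f w i * (starRingEnd ℂ) (f w j) * (auxH f w)⁻¹)
        + (α₁:ℂ) * (auxG f i w * (starRingEnd ℂ) (auxG f j w) * (auxH1 f w)⁻¹)) ζ
      = ((α₀:ℂ) * (auxH f ζ)⁻¹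
            - (α₁:ℂ) * (starRingEnd ℂ) (wDbar (auxU f) ζ) * (auxH1 f ζ)⁻¹)
          * (auxG f i ζ * (starRingEnd ℂ) (f ζ j))
        + ((α₁:ℂ) * (auxH1 f ζ)⁻¹)
          * ((wD (auxG f i) ζ - auxG f i ζ
              * ((∑ k, (starRingEnd ℂ) (auxG f k ζ) * wD (auxG f k) ζ) * (auxH1 f ζ)⁻¹))
            * (starRingEnd ℂ) (auxG f j ζ)) := by
  have hd1 : DifferentiableAt ℝ
      (fun w => (α₀:ℂ) * (f w i * (starRingEnd ℂ) (f w j) * (auxH f w)⁻¹)) ζ :=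
    (differentiableAt_const _).mul (((aux_hFd hf i ζ).mul
      (diffAt_conj (aux_hFd hf j ζ))).mul ((aux_hHd hf ζ).inv (aux_hH0 hf0 ζ)))
  have hd2 : DifferentiableAt ℝ
      (fun w => (α₁:ℂ) * (auxG f i w * (starRingEnd ℂ) (auxG f j w) * (auxH1 f w)⁻¹)) ζ :=
    (differentiableAt_const _).mul (((aux_hGd hf hf0 i ζ).mul
      (diffAt_conj (aux_hGd hf hf0 j ζ))).mul ((aux_hH1d hf hf0 ζ).inv (aux_hH1_0 hf hPf0 ζ)))
  rw [wD_add hd1 hd2,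
    wD_const_mul _ (((aux_hFd hf i ζ).fun_mul (diffAt_conj (aux_hFd hf j ζ))).fun_mul
      ((aux_hHd hf ζ).fun_inv (aux_hH0 hf0 ζ))),
    wD_const_mul _ (((aux_hGd hf hf0 i ζ).fun_mul (diffAt_conj (aux_hGd hf hf0 j ζ))).fun_mul
      ((aux_hH1d hf hf0 ζ).fun_inv (aux_hH1_0 hf hPf0 ζ))),
    wD_projEntry (aux_hFd hf i ζ) (aux_hFd hf j ζ) (aux_hHd hf ζ) (aux_hH0 hf0 ζ),
    wD_projEntry (aux_hGd hf hf0 i ζ) (aux_hGd hf hf0 j ζ) (aux_hH1d hf hf0 ζ)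
      (aux_hH1_0 hf hPf0 ζ),
    aux_wDF hf i ζ, wDbar_holo ((hf j) ζ), aux_wDH hf ζ, aux_wDbarG hf hf0 j ζ,
    aux_wDH1 hf hf0 ζ]
  simp only [map_zero, map_neg, _root_.map_mul, mul_zero, add_zero]
  have hGi : auxG f i ζ = auxF' f i ζ - f ζ i * (auxS f ζ * (auxH f ζ)⁻¹) := rfl
  rw [hGi]
  obtain ⟨T, hT⟩ : ∃ T, ∑ k, (starRingEnd ℂ) (auxG f k ζ) * wD (auxG f k) ζ = T := ⟨_, rfl⟩
  rw [hT]
  field_simp [aux_hH0 hf0 ζ, aux_hH1_0 hf hPf0 ζ]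
  ring

end AuxLemmas

/-- Pure algebra: trace of the square of a matrix of the form
`c₁·w v† + c₂·r w†` with mutually orthogonal `v, w, r` vanishes. -/
lemma trace_aux {N : ℕ} (v w r : Fin N → ℂ) (c₁ c₂ : ℂ) (A : Matrix (Fin N) (Fin N) ℂ)
    (hA : ∀ i j, A i j = c₁ * (w i * (starRingEnd ℂ) (v j)) + c₂ * (r i * (starRingEnd ℂ) (w j)))
    (h1 : ∑ i, (starRingEnd ℂ) (v i) * w i = 0)
    (h2 : ∑ i, (starRingEnd ℂ) (v i) * r i = 0)
    (h3 : ∑ i, (starRingEnd ℂ) (w i) * r i = 0) :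
    Matrix.trace (A * A) = 0 := by
  have hTr : Matrix.trace (A * A) = ∑ i, ∑ j, A i j * A j i := by
    simp [Matrix.trace, Matrix.mul_apply, Matrix.diag]
  rw [hTr]
  have key : ∀ i j : Fin N, A i j * A j i
      = (c₁ * ((starRingEnd ℂ) (v i) * w i)) * (c₁ * ((starRingEnd ℂ) (v j) * w j))
        + (c₁ * ((starRingEnd ℂ) (w i) * w i)) * (c₂ * ((starRingEnd ℂ) (v j) * r j))
        + (c₂ * ((starRingEnd ℂ) (v i) * r i)) * (c₁ * ((starRingEnd ℂ) (w j) * w j))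
        + (c₂ * ((starRingEnd ℂ) (w i) * r i)) * (c₂ * ((starRingEnd ℂ) (w j) * r j)) := by
    intro i j
    rw [hA i j, hA j i]
    ring
  have hy1 : ∑ j, c₁ * ((starRingEnd ℂ) (v j) * w j) = 0 := by
    rw [← Finset.mul_sum, h1, mul_zero]
  have hy2 : ∑ j, c₂ * ((starRingEnd ℂ) (v j) * r j) = 0 := by
    rw [← Finset.mul_sum, h2, mul_zero]
  have hy4 : ∑ j, c₂ * ((starRingEnd ℂ) (w j) * r j) = 0 := by
    rw [← Finset.mul_sum, h3, mul_zero]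
  calc ∑ i, ∑ j, A i j * A j i
      = ∑ i, ((c₁ * ((starRingEnd ℂ) (v i) * w i)) * ∑ j, (c₁ * ((starRingEnd ℂ) (v j) * w j))
        + (c₁ * ((starRingEnd ℂ) (w i) * w i)) * ∑ j, (c₂ * ((starRingEnd ℂ) (v j) * r j))
        + (c₂ * ((starRingEnd ℂ) (v i) * r i)) * ∑ j, (c₁ * ((starRingEnd ℂ) (w j) * w j))
        + (c₂ * ((starRingEnd ℂ) (w i) * r i)) * ∑ j, (c₂ * ((starRingEnd ℂ) (w j) * r j))) := by
        refine Finset.sum_congr rfl fun i _ => ?_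
        rw [Finset.mul_sum, Finset.mul_sum, Finset.mul_sum, Finset.mul_sum,
          ← Finset.sum_add_distrib, ← Finset.sum_add_distrib, ← Finset.sum_add_distrib]
        exact Finset.sum_congr rfl fun j _ => key i j
    _ = ∑ i, ((c₂ * ((starRingEnd ℂ) (v i) * r i)) *
          ∑ j, (c₁ * ((starRingEnd ℂ) (w j) * w j))) := by
        refine Finset.sum_congr rfl fun i _ => ?_
        simp only [hy1, hy2, hy4, mul_zero, zero_add, add_zero]
    _ = (∑ i, c₂ * ((starRingEnd ℂ) (v i) * r i)) *
          ∑ j, (c₁ * ((starRingEnd ℂ) (w j) * w j)) := by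
        rw [Finset.sum_mul]
    _ = 0 := by rw [hy2, zero_mul]

/-- For `ℙ = α₀ P(f) + α₁ P(P₊f)` (α₀, α₁ real constants),
`tr(∂ℙ · ∂ℙ) = 0` everywhere: the `(+,+)` metric component vanishes. -/
theorem stmt_3 {N : ℕ} (f : ℂ → Fin N → ℂ)
    (hf : ∀ i, Differentiable ℂ fun z => f z i)
    (hf0 : ∀ z, f z ≠ 0) (hPf0 : ∀ z, Pp f z ≠ 0)
    (α₀ α₁ : ℝ) :
    ∀ ζ : ℂ,
      Matrix.trace
        (wDM (fun w => (α₀ : ℂ) • proj f w + (α₁ : ℂ) • proj (Pp f) w) ζ *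
         wDM (fun w => (α₀ : ℂ) • proj f w + (α₁ : ℂ) • proj (Pp f) w) ζ) = 0 := by
  intro ζ
  classical
  refine trace_aux (fun i => f ζ i) (fun i => auxG f i ζ)
    (fun i => wD (auxG f i) ζ - auxG f i ζ
      * ((∑ k, (starRingEnd ℂ) (auxG f k ζ) * wD (auxG f k) ζ) * (auxH1 f ζ)⁻¹))
    ((α₀:ℂ) * (auxH f ζ)⁻¹
      - (α₁:ℂ) * (starRingEnd ℂ) (wDbar (auxU f) ζ) * (auxH1 f ζ)⁻¹)
    ((α₁:ℂ) * (auxH1 f ζ)⁻¹) _ ?_ ?_ ?_ ?_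
  · intro i j
    have hfun : (fun w => ((α₀ : ℂ) • proj f w + (α₁ : ℂ) • proj (Pp f) w) i j)
        = fun w => (α₀:ℂ) * (f w i * (starRingEnd ℂ) (f w j) * (auxH f w)⁻¹)
            + (α₁:ℂ) * (auxG f i w * (starRingEnd ℂ) (auxG f j w) * (auxH1 f w)⁻¹) := by
      funext w
      have hP : ∀ k, Pp f w k = auxG f k w := aux_hPp hf w
      simp only [Matrix.add_apply, Matrix.smul_apply, proj, smul_eq_mul, herm, hP,
        div_eq_mul_inv]
      rfl
    show wD (fun w => ((α₀ : ℂ) • proj f w + (α₁ : ℂ) • proj (Pp f) w) i j) ζ = _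
    rw [hfun]
    exact aux_entry hf hf0 hPf0 α₀ α₁ ζ i j
  · exact aux_hvw hf hf0 ζ
  · exact aux_orth_v hf hf0 ζ _
  · exact aux_orth_w hf hf0 hPf0 ζ
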